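/- For every s-step reasoning chain a, every permutation σ of {1,…,s}, every reasoning start x(2s+1) = (a m₀).1 with 1 ≤ m₀ ≤ s, and every layer l with 1 ≤ l and 2^(l−1) ≤ s, the information quantity at the final position satisfies C^l_(2s+1) = |V^l_(2s+1)| ≥ 2^(l−1). -/
import Mathlib


/-- An `s`-step reasoning chain, with pairs indexed by `1, …, s`:
entries of a pair differ, consecutive pairs link up, and there are no loops. -/
def IsChainOn (s : ℤ) (a : ℤ → ℤ × ℤ) : Prop :=
  (∀ i, 1 ≤ i → i ≤ s → (a i).1 ≠ (a i).2) ∧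
  (∀ i, 1 ≤ i → i ≤ s - 1 → (a i).2 = (a (i + 1)).1) ∧
  (∀ i j, 1 ≤ i → i ≤ j → j ≤ s → (a i).1 ≠ (a j).2)

/-- `x` is the `s`-step reasoning sequence built from the chain `a` and a
permutation `σ` of `{1, …, s}`. -/
def IsSeqOn (s : ℤ) (a : ℤ → ℤ × ℤ) (σ : ℤ → ℤ) (x : ℤ → ℤ) : Prop :=
  Set.BijOn σ (Set.Icc 1 s) (Set.Icc 1 s) ∧
  ∀ m : ℤ, 1 ≤ m → m ≤ s → x (2 * m - 1) = (a (σ m)).1 ∧ x (2 * m) = (a (σ m)).2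

/-- Value sets of maximal masked information propagation on the (finite, positions
`≥ 1`) sequence `x`: layer 0 is the token itself, layer 1 performs adjacent position
matching into even positions, and higher layers perform same-token matching from
all earlier positions `j` with `1 ≤ j < i`. -/
def valueSetM (x : ℤ → ℤ) : ℕ → ℤ → Set ℤ
  | 0, i => {x i}
  | 1, i => if Even i then {x (i - 1), x i} else {x i}
  | l + 2, i =>
      valueSetM x (l + 1) i ∪
        ⋃ (j : ℤ)
          (_ : 1 ≤ j ∧ j < i ∧ (valueSetM x (l + 1) j ∩ valueSetM x (l + 1) i).Nonempty),
          valueSetM x (l + 1) j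

lemma valueSetM_mono (x : ℤ → ℤ) (l : ℕ) (i : ℤ) :
    valueSetM x l i ⊆ valueSetM x (l + 1) i := by
  match l with
  | 0 =>
    intro y hy
    simp only [valueSetM, Set.mem_singleton_iff] at hy
    subst hy
    simp only [valueSetM]
    split
    · exact Set.mem_insert_iff.mpr (Or.inr rfl)
    · exact rfl
  | n + 1 =>
    show valueSetM x (n + 1) i ⊆ valueSetM x (n + 2) i
    simp only [valueSetM]
    exact Set.subset_union_left

lemma valueSetM_absorb (x : ℤ → ℤ) (l : ℕ) (i j : ℤ) (h1 : 1 ≤ j) (h2 : j < i)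
    (h3 : (valueSetM x (l + 1) j ∩ valueSetM x (l + 1) i).Nonempty) :
    valueSetM x (l + 1) j ⊆ valueSetM x (l + 2) i := by
  intro y hy
  simp only [valueSetM]
  refine Set.mem_union_right _ ?_
  exact Set.mem_iUnion.mpr ⟨j, Set.mem_iUnion.mpr ⟨⟨h1, h2, h3⟩, hy⟩⟩

lemma valueSetM_finite (x : ℤ → ℤ) : ∀ (l : ℕ) (i : ℤ), (valueSetM x l i).Finite := by
  intro l
  induction l using Nat.strong_induction_on with
  | _ l ih =>
    match l with
    | 0 => intro i; simp only [valueSetM]; exact Set.finite_singleton _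
    | 1 =>
      intro i
      simp only [valueSetM]
      split
      · exact (Set.finite_singleton _).insert _
      · exact Set.finite_singleton _
    | n + 2 =>
      intro i
      simp only [valueSetM]
      apply Set.Finite.union (ih (n + 1) (by omega) i)
      have hsub : (⋃ (j : ℤ)
          (_ : 1 ≤ j ∧ j < i ∧ (valueSetM x (n + 1) j ∩ valueSetM x (n + 1) i).Nonempty),
          valueSetM x (n + 1) j)
          ⊆ ⋃ j ∈ Set.Icc (1 : ℤ) (i - 1), valueSetM x (n + 1) j := by
        intro y hy
        simp only [Set.mem_iUnion, Set.mem_Icc] at hy ⊢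
        obtain ⟨j, ⟨hj1, hj2, _⟩, hyj⟩ := hy
        exact ⟨j, ⟨hj1, by omega⟩, hyj⟩
      exact Set.Finite.subset ((Set.finite_Icc _ _).biUnion fun j _ => ih (n + 1) (by omega) j)
        hsub

/-- lower bound `C^l_{2s+1} ≥ 2^(l-1)` at the reasoning-start position. -/
theorem lower_bound_at_start
    (s : ℤ) (hs : 1 ≤ s) (a : ℤ → ℤ × ℤ) (σ : ℤ → ℤ) (x : ℤ → ℤ) (m₀ : ℤ)
    (ha : IsChainOn s a) (hx : IsSeqOn s a σ x)
    (hm₀ : 1 ≤ m₀ ∧ m₀ ≤ s) (hstart : x (2 * s + 1) = (a m₀).1)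
    (l : ℕ) (hl : 1 ≤ l) (hls : (2 : ℤ) ^ (l - 1) ≤ s) :
    2 ^ (l - 1) ≤ (valueSetM x l (2 * s + 1)).ncard := by
  obtain ⟨hm₁, hm₂⟩ := hm₀
  obtain ⟨-, ha2, ha3⟩ := ha
  obtain ⟨⟨hmaps, -, hsurjσ⟩, hvals⟩ := hx
  -- the chain values v 0, v 1, …, v s
  obtain ⟨v, hv1, hv2⟩ : ∃ v : ℤ → ℤ,
      (∀ m : ℤ, 1 ≤ m → m ≤ s → v (m - 1) = (a m).1) ∧
      (∀ m : ℤ, 1 ≤ m → m ≤ s → v m = (a m).2) := by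
    refine ⟨fun t => if t < s then (a (t + 1)).1 else (a s).2, ?_, ?_⟩
    · intro m h1 h2
      simp only
      rw [if_pos (by omega), show m - 1 + 1 = m from by ring]
    · intro m h1 h2
      simp only
      by_cases h : m < s
      · rw [if_pos h, ← ha2 m h1 (by omega)]
      · rw [if_neg h, show m = s from by omega]
  have hvinj : ∀ p q : ℤ, 0 ≤ p → p < q → q ≤ s → v p ≠ v q := by
    intro p q h0 hpq hqs
    rw [show p = p + 1 - 1 from by ring, hv1 (p + 1) (by omega) (by omega),
      hv2 q (by omega) hqs]
    exact ha3 (p + 1) q (by omega) (by omega) hqs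
  have hxo : ∀ m : ℤ, 1 ≤ m → m ≤ s →
      x (2 * m - 1) = v (σ m - 1) ∧ x (2 * m) = v (σ m) := by
    intro m h1 h2
    have hσm := hmaps (Set.mem_Icc.mpr ⟨h1, h2⟩)
    rw [Set.mem_Icc] at hσm
    obtain ⟨e1, e2⟩ := hvals m h1 h2
    exact ⟨by rw [e1, hv1 (σ m) hσm.1 hσm.2], by rw [e2, hv2 (σ m) hσm.1 hσm.2]⟩
  have hpair : ∀ m : ℤ, 1 ≤ m → m ≤ s →
      v (σ m - 1) ∈ valueSetM x 1 (2 * m) ∧ v (σ m) ∈ valueSetM x 1 (2 * m) := by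
    intro m h1 h2
    obtain ⟨e1, e2⟩ := hxo m h1 h2
    have hset : valueSetM x 1 (2 * m) = {x (2 * m - 1), x (2 * m)} := by
      simp only [valueSetM]
      rw [if_pos ⟨m, by ring⟩]
    rw [hset, e1, e2]
    exact ⟨Set.mem_insert _ _, Set.mem_insert_iff.mpr (Or.inr rfl)⟩
  have hstart' : x (2 * s + 1) = v (m₀ - 1) := by
    rw [hstart, hv1 m₀ hm₁ hm₂]
  have hsurj : ∀ t : ℤ, 1 ≤ t → t ≤ s → ∃ m, 1 ≤ m ∧ m ≤ s ∧ σ m = t := by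
    intro t h1 h2
    obtain ⟨m, hm, hσ⟩ := hsurjσ (Set.mem_Icc.mpr ⟨h1, h2⟩)
    rw [Set.mem_Icc] at hm
    exact ⟨m, hm.1, hm.2, hσ⟩
  -- KEY: any two of the chain values at distance ≤ 2^n meet in a common even
  -- position at layer n+1
  have key : ∀ n : ℕ, ∀ t u : ℤ, 0 ≤ t → t ≤ s → 0 ≤ u → u ≤ s →
      t - 2 ^ n ≤ u → u ≤ t + 2 ^ n →
      ∃ m, 1 ≤ m ∧ m ≤ s ∧
        v t ∈ valueSetM x (n + 1) (2 * m) ∧ v u ∈ valueSetM x (n + 1) (2 * m) := by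
    intro n
    induction n with
    | zero =>
      intro t u ht0 hts hu0 hus hL hRR
      norm_num at hL hRR
      rcases show u = t - 1 ∨ u = t ∨ u = t + 1 from by omega with h | h | h
      · obtain ⟨m, h1, h2, hσ⟩ := hsurj t (by omega) hts
        refine ⟨m, h1, h2, ?_, ?_⟩
        · have := (hpair m h1 h2).2; rwa [hσ] at this
        · have := (hpair m h1 h2).1; rwa [hσ, show t - 1 = u from by omega] at this
      · rcases eq_or_lt_of_le ht0 with h0 | h0
        · obtain ⟨m, h1, h2, hσ⟩ := hsurj 1 le_rfl hs
          have := (hpair m h1 h2).1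
          rw [hσ, show (1 : ℤ) - 1 = t from by omega] at this
          exact ⟨m, h1, h2, this, by rwa [h]⟩
        · obtain ⟨m, h1, h2, hσ⟩ := hsurj t (by omega) hts
          have := (hpair m h1 h2).2
          rw [hσ] at this
          exact ⟨m, h1, h2, this, by rwa [h]⟩
      · obtain ⟨m, h1, h2, hσ⟩ := hsurj u (by omega) hus
        refine ⟨m, h1, h2, ?_, ?_⟩
        · have := (hpair m h1 h2).1; rwa [hσ, show u - 1 = t from by omega] at this
        · have := (hpair m h1 h2).2; rwa [hσ] at this
    | succ n ih =>
      intro t u ht0 hts hu0 hus hL hRR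
      have hp : (2 : ℤ) ^ (n + 1) = 2 ^ n + 2 ^ n := by rw [pow_succ]; ring
      rw [hp] at hL hRR
      have hRpos : (0 : ℤ) < 2 ^ n := by positivity
      set R := (2 : ℤ) ^ n with hR
      obtain ⟨w, hw0, hws, hw1, hw2, hw3, hw4⟩ : ∃ w : ℤ, 0 ≤ w ∧ w ≤ s ∧
          t - R ≤ w ∧ w ≤ t + R ∧ w - R ≤ u ∧ u ≤ w + R := by
        rcases le_total (t - R) u with h2 | h2
        · rcases le_total u (t + R) with h1 | h1
          · exact ⟨u, by omega, by omega, by omega, by omega, by omega, by omega⟩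
          · exact ⟨t + R, by omega, by omega, by omega, by omega, by omega, by omega⟩
        · exact ⟨t - R, by omega, by omega, by omega, by omega, by omega, by omega⟩
      obtain ⟨m1, hm11, hm12, ht1, hw1'⟩ := ih t w ht0 hts hw0 hws hw1 hw2
      obtain ⟨m2, hm21, hm22, hw2', hu2'⟩ := ih w u hw0 hws hu0 hus hw3 hw4
      rcases lt_trichotomy m1 m2 with hlt | heq | hgt
      · refine ⟨m2, hm21, hm22, ?_, valueSetM_mono x (n + 1) _ hu2'⟩
        exact valueSetM_absorb x n (2 * m2) (2 * m1) (by omega) (by omega)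
          ⟨v w, hw1', hw2'⟩ ht1
      · subst heq
        exact ⟨m1, hm11, hm12, valueSetM_mono x (n + 1) _ ht1,
          valueSetM_mono x (n + 1) _ hu2'⟩
      · refine ⟨m1, hm11, hm12, valueSetM_mono x (n + 1) _ ht1, ?_⟩
        exact valueSetM_absorb x n (2 * m1) (2 * m2) (by omega) (by omega)
          ⟨v w, hw2', hw1'⟩ hu2'
  -- FINAL: values within distance 2^n - 1 of m₀ - 1 reach the final position
  have final : ∀ n : ℕ, ∀ u : ℤ, 0 ≤ u → u ≤ s →
      m₀ - 1 - (2 ^ n - 1) ≤ u → u ≤ m₀ - 1 + (2 ^ n - 1) →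
      v u ∈ valueSetM x (n + 1) (2 * s + 1) := by
    intro n
    induction n with
    | zero =>
      intro u hu0 hus h1 h2
      norm_num at h1 h2
      have hset : valueSetM x 1 (2 * s + 1) = {x (2 * s + 1)} := by
        simp only [valueSetM]
        rw [if_neg]
        rintro ⟨r, hr⟩
        omega
      rw [hset, hstart', show u = m₀ - 1 from by omega]
      exact rfl
    | succ n ih =>
      intro u hu0 hus h1 h2
      have hp : (2 : ℤ) ^ (n + 1) = 2 ^ n + 2 ^ n := by rw [pow_succ]; ring
      rw [hp] at h1 h2
      have hRpos : (0 : ℤ) < 2 ^ n := by positivity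
      set R := (2 : ℤ) ^ n with hR
      obtain ⟨w, hw0, hws, hw1, hw2, hw3, hw4⟩ : ∃ w : ℤ, 0 ≤ w ∧ w ≤ s ∧
          m₀ - 1 - (R - 1) ≤ w ∧ w ≤ m₀ - 1 + (R - 1) ∧ w - R ≤ u ∧ u ≤ w + R := by
        rcases le_total (m₀ - 1 - (R - 1)) u with h | h
        · rcases le_total u (m₀ - 1 + (R - 1)) with h' | h'
          · exact ⟨u, by omega, by omega, by omega, by omega, by omega, by omega⟩
          · exact ⟨m₀ - 1 + (R - 1), by omega, by omega, by omega, by omega, by omega,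
              by omega⟩
        · exact ⟨m₀ - 1 - (R - 1), by omega, by omega, by omega, by omega, by omega,
            by omega⟩
      have hvw := ih w hw0 hws hw1 hw2
      obtain ⟨m, hmm1, hmm2, hwm, hum⟩ := key n w u hw0 hws hu0 hus
        (by rw [← hR]; omega) (by rw [← hR]; omega)
      exact valueSetM_absorb x n (2 * s + 1) (2 * m) (by omega) (by omega)
        ⟨v w, hwm, hvw⟩ hum
  -- main computation
  obtain ⟨n, rfl⟩ : ∃ n, l = n + 1 := ⟨l - 1, by omega⟩
  rw [show n + 1 - 1 = n from rfl] at hls ⊢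
  have hfin := final n
  have hRpos : (0 : ℤ) < 2 ^ n := by positivity
  have hcast : ((2 ^ n : ℕ) : ℤ) = (2 : ℤ) ^ n := by push_cast; ring
  obtain ⟨N, hNat⟩ : ∃ N : ℕ, N = 2 ^ n := ⟨2 ^ n, rfl⟩
  rw [← hNat] at hcast ⊢
  set R := (2 : ℤ) ^ n with hR
  set lo := max 0 (m₀ - 1 - (R - 1)) with hlo
  set hi := min s (m₀ - 1 + (R - 1)) with hhi
  have h1 : (0 : ℤ) ≤ lo := le_max_left _ _
  have h2 : m₀ - 1 - (R - 1) ≤ lo := le_max_right _ _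
  have h2' : lo = 0 ∨ lo = m₀ - 1 - (R - 1) := max_choice _ _
  have h3 : hi ≤ s := min_le_left _ _
  have h4 : hi ≤ m₀ - 1 + (R - 1) := min_le_right _ _
  have h4' : hi = s ∨ hi = m₀ - 1 + (R - 1) := min_choice _ _
  have hsub : v '' Set.Icc lo hi ⊆ valueSetM x (n + 1) (2 * s + 1) := by
    rintro y ⟨u, hu, rfl⟩
    rw [Set.mem_Icc] at hu
    exact hfin u (by omega) (by omega) (by omega) (by omega)
  have hinj : Set.InjOn v (Set.Icc lo hi) := by
    intro p hp q hq hpq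
    rw [Set.mem_Icc] at hp hq
    by_contra hne
    rcases lt_or_gt_of_ne hne with h | h
    · exact hvinj p q (by omega) h (by omega) hpq
    · exact hvinj q p (by omega) h (by omega) hpq.symm
  have hcard1 : (Set.Icc lo hi).ncard = (hi + 1 - lo).toNat := by
    rw [← Finset.coe_Icc, Set.ncard_coe_finset, Int.card_Icc]
  calc N ≤ (Set.Icc lo hi).ncard := by rw [hcard1]; omega
    _ = (v '' Set.Icc lo hi).ncard := (Set.ncard_image_of_injOn hinj).symm
    _ ≤ (valueSetM x (n + 1) (2 * s + 1)).ncard :=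
      Set.ncard_le_ncard hsub (valueSetM_finite x _ _)
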